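/- arXiv:2407.18755 — 4 statements merged into one kernel-verified Lean document; each statement's English description precedes it below -/
import Mathlib

section
/- Let P : Ω → ℝ^k and Ñ : Ω → ℝ be independent random variables, where P has a Lebesgue density, Ñ is integrable with a strictly positive, continuously differentiable Lebesgue density p_Ñ, and let f : ℝ^k → ℝ be Borel measurable with f(P) integrable. Set Y := f(P) + Ñ and R := Y − E[Y | σ(P)], and define s(x, y) := p_Ñ'(y − f(x)) / p_Ñ(y − f(x)) (the partial derivative in y of the logarithm of the joint density of (P, Y)). If s(P, Y) is square-integrable, then E[(s(P, Y) − E[s(P, Y) | σ(R)])²] = 0. -/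
/-!
By independence, `E[f(P) + N | σ(P)] = f(P) + E[N]`, so the residual is `R = N - E[N]` almost
surely. The score `s(P, Y) = p_N'(N) / p_N(N)` depends on the noise alone, hence equals
`(log p_N)'(R + E[N])`, a σ(R)-measurable variable that is its own conditional expectation.
-/

open MeasureTheory ProbabilityTheory

namespace ProbabilityTheory

variable {Ω E : Type*} {mΩ : MeasurableSpace Ω} [MeasurableSpace E] {μ : Measure Ω}
  [IsFiniteMeasure μ]

theorem condExp_comap_add_of_indepFun {X : Ω → E} {N : Ω → ℝ} {g : E → ℝ}
    (hX : Measurable X) (hN : Measurable N) (hindep : IndepFun X N μ) (hg : Measurable g)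
    (hgX : Integrable (fun ω => g (X ω)) μ) (hNint : Integrable N μ) :
    μ[fun ω => g (X ω) + N ω | MeasurableSpace.comap X inferInstance]
      =ᵐ[μ] fun ω => g (X ω) + μ[N] := by
  have hgX_meas : StronglyMeasurable[MeasurableSpace.comap X inferInstance] fun ω => g (X ω) :=
    (hg.comp (comap_measurable X)).stronglyMeasurable
  have hN_indep : μ[N | MeasurableSpace.comap X inferInstance] =ᵐ[μ] fun _ => μ[N] :=
    condExp_indep_eq hN.comap_le hX.comap_le (comap_measurable N).stronglyMeasurable
      ((IndepFun_iff_Indep N X μ).mp hindep.symm)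
  filter_upwards [condExp_add hgX hNint (MeasurableSpace.comap X inferInstance), hN_indep]
    with ω hadd hω
  change μ[(fun ω => g (X ω)) + N | _] ω = _
  rw [hadd, Pi.add_apply, condExp_of_stronglyMeasurable hX.comap_le hgX_meas hgX, hω]

theorem sub_condExp_comap_add_of_indepFun {X : Ω → E} {N : Ω → ℝ} {g : E → ℝ}
    (hX : Measurable X) (hN : Measurable N) (hindep : IndepFun X N μ) (hg : Measurable g)
    (hgX : Integrable (fun ω => g (X ω)) μ) (hNint : Integrable N μ) :
    (fun ω => g (X ω) + N ω - μ[fun ω => g (X ω) + N ω | MeasurableSpace.comap X inferInstance] ω)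
      =ᵐ[μ] fun ω => N ω - μ[N] := by
  filter_upwards [condExp_comap_add_of_indepFun hX hN hindep hg hgX hNint] with ω hω
  rw [hω]
  ring

theorem condExp_comap_of_ae_eq_comp {R : Ω → E} {F : Ω → ℝ} {h : E → ℝ}
    (hR : Measurable R) (hh : Measurable h) (hF : F =ᵐ[μ] fun ω => h (R ω))
    (hFint : Integrable F μ) :
    μ[F | MeasurableSpace.comap R inferInstance] =ᵐ[μ] F :=
  condExp_of_aestronglyMeasurable' hR.comap_le
    (((hh.comp (comap_measurable R)).stronglyMeasurable.aestronglyMeasurable).congr hF.symm)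
    hFint

end ProbabilityTheory

theorem Continuous.measurable_logDeriv {f : ℝ → ℝ} (hf : Continuous f) :
    Measurable (logDeriv f) :=
  (measurable_deriv f).div hf.measurable

theorem stmt_2_general
    {Ω : Type*} {mΩ : MeasurableSpace Ω}
    (μ : Measure Ω) [IsProbabilityMeasure μ]
    (k : ℕ)
    (P : Ω → (Fin k → ℝ)) (N : Ω → ℝ)
    (hP : Measurable P) (hN : Measurable N)
    (hindep : IndepFun P N μ)
    (hNint : Integrable N μ)
    (pN : ℝ → ℝ) (hpNC1 : ContDiff ℝ 1 pN)
    (f : (Fin k → ℝ) → ℝ) (hf : Measurable f)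
    (hfint : Integrable (fun ω => f (P ω)) μ)
    (Y : Ω → ℝ) (hY : Y = fun ω => f (P ω) + N ω)
    (R : Ω → ℝ)
    (hR : R = fun ω => Y ω - (μ[Y | MeasurableSpace.comap P inferInstance]) ω)
    (s : (Fin k → ℝ) → ℝ → ℝ)
    (hs : ∀ x y, s x y = deriv pN (y - f x) / pN (y - f x))
    (hs2 : MemLp (fun ω => s (P ω) (Y ω)) 2 μ) :
    ∫ ω, (s (P ω) (Y ω)
        - (μ[fun ω => s (P ω) (Y ω) | MeasurableSpace.comap R inferInstance]) ω) ^ 2 ∂μ = 0 := by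
  have hY_meas : Measurable Y := hY ▸ (hf.comp hP).add hN
  have hR_meas : Measurable R :=
    hR ▸ hY_meas.sub (stronglyMeasurable_condExp.mono hP.comap_le).measurable
  have hR_ae : R =ᵐ[μ] fun ω => N ω - μ[N] := by
    subst hR hY
    exact sub_condExp_comap_add_of_indepFun hP hN hindep hf hfint hNint
  have hscore : (fun ω => s (P ω) (Y ω)) =ᵐ[μ] fun ω => logDeriv pN (R ω + μ[N]) := by
    filter_upwards [hR_ae] with ω hω
    rw [hω, hs, hY, logDeriv_apply]
    ring_nf
  have hcond := condExp_comap_of_ae_eq_comp hR_meas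
    (hpNC1.continuous.measurable_logDeriv.comp (measurable_add_const _)) hscore
    (hs2.integrable one_le_two)
  refine integral_eq_zero_of_ae ?_
  filter_upwards [hcond] with ω hω
  simp [hω]

/-- In an additive noise model `Y = f(P) + Ñ` with `P ⟂ Ñ`, the conditional score
`s(P, Y) = p_Ñ'(Y - f(P)) / p_Ñ(Y - f(P))` can be predicted with zero mean-squared error from the
regression residual `R = Y - E[Y | σ(P)]`. -/
theorem stmt_2
    {Ω : Type*} {mΩ : MeasurableSpace Ω}
    (μ : Measure Ω) [IsProbabilityMeasure μ]
    (k : ℕ)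
    (P : Ω → (Fin k → ℝ)) (N : Ω → ℝ)
    (hP : Measurable P) (hN : Measurable N)
    (hindep : IndepFun P N μ)
    (pP : (Fin k → ℝ) → ℝ)
    (hPdens : Measure.map P μ = volume.withDensity (fun x => ENNReal.ofReal (pP x)))
    (hNint : Integrable N μ)
    (pN : ℝ → ℝ) (hpNpos : ∀ t, 0 < pN t) (hpNC1 : ContDiff ℝ 1 pN)
    (hNdens : Measure.map N μ = volume.withDensity (fun t => ENNReal.ofReal (pN t)))
    (f : (Fin k → ℝ) → ℝ) (hf : Measurable f)
    (hfint : Integrable (fun ω => f (P ω)) μ)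
    (Y : Ω → ℝ) (hY : Y = fun ω => f (P ω) + N ω)
    (R : Ω → ℝ)
    (hR : R = fun ω => Y ω - (μ[Y | MeasurableSpace.comap P inferInstance]) ω)
    (s : (Fin k → ℝ) → ℝ → ℝ)
    (hs : ∀ x y, s x y = deriv pN (y - f x) / pN (y - f x))
    (hs2 : MemLp (fun ω => s (P ω) (Y ω)) 2 μ) :
    ∫ ω, (s (P ω) (Y ω)
        - (μ[fun ω => s (P ω) (Y ω) | MeasurableSpace.comap R inferInstance]) ω) ^ 2 ∂μ = 0 :=
  stmt_2_general (mΩ := mΩ) μ k P N hP hN hindep hNint pN hpNC1 f hf hfint Y hY R hR s hs hs2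
end

section
/- Let ξ, ν, f : ℝ → ℝ be three times continuously differentiable and define π(x₁, x₂) := ξ(x₁) + ν(x₂ − f(x₁)), so that ∂²π/∂x₁²(x₁, x₂) = ξ''(x₁) − f''(x₁) ν'(x₂ − f(x₁)) + f'(x₁)² ν''(x₂ − f(x₁)) and ∂²π/∂x₁∂x₂(x₁, x₂) = −f'(x₁) ν''(x₂ − f(x₁)). Fix (a, b) ∈ ℝ² with f'(a) · ν''(b − f(a)) ≠ 0 and set u := b − f(a). If the derivative at x₁ = a of the map x₁ ↦ (∂²π/∂x₁²(x₁, b)) / (∂²π/∂x₁∂x₂(x₁, b)) equals zero, then the differential equation ξ'''(a) = ξ''(a)·(f''(a)/f'(a) − ν'''(u) f'(a)/ν''(u)) + ν'''(u) ν'(u) f''(a) f'(a)/ν''(u) − ν'(u) f''(a)² / f'(a) − 2 ν''(u) f''(a) f'(a) + ν'(u) f'''(a) holds. -/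
private lemma cd_deriv (n : ℕ) (g : ℝ → ℝ) (hg : ContDiff ℝ (n+1 : ℕ) g) :
    ContDiff ℝ (n : ℕ) (deriv g) := by
  have h3 : ContDiff ℝ ((n:ℕ∞)+1) g := by exact_mod_cast hg
  exact_mod_cast (contDiff_succ_iff_deriv.mp h3).2.2

/-- If the derivative in `x₁` of the ratio of the second partial derivative
`∂²π/∂x₁²` to the cross-partial `∂²π/∂x₁∂x₂` of the joint log-density
`π(x₁, x₂) = ξ(x₁) + ν(x₂ - f(x₁))` vanishes at a point where `f'(a)·ν''(b - f(a)) ≠ 0`, then the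
differential equation of Condition 19 of Peters et al. (2014) holds at that point. -/
theorem stmt_3
    (ξ ν f : ℝ → ℝ)
    (hξ : ContDiff ℝ 3 ξ) (hν : ContDiff ℝ 3 ν) (hf : ContDiff ℝ 3 f)
    (π : ℝ → ℝ → ℝ)
    (hπ : ∀ x₁ x₂, π x₁ x₂ = ξ x₁ + ν (x₂ - f x₁))
    (a b : ℝ)
    (hnz : deriv f a * deriv (deriv ν) (b - f a) ≠ 0)
    (u : ℝ) (hu : u = b - f a)
    (h0 : deriv (fun x₁ =>
        (deriv (deriv (fun t => π t b)) x₁)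
          / (deriv (fun t => deriv (fun s => π t s) b) x₁)) a = 0) :
    deriv (deriv (deriv ξ)) a
      = deriv (deriv ξ) a * (deriv (deriv f) a / deriv f a
            - deriv (deriv (deriv ν)) u * deriv f a / deriv (deriv ν) u)
        + deriv (deriv (deriv ν)) u * deriv ν u * deriv (deriv f) a * deriv f a
            / deriv (deriv ν) u
        - deriv ν u * (deriv (deriv f) a) ^ 2 / deriv f a
        - 2 * deriv (deriv ν) u * deriv (deriv f) a * deriv f a
        + deriv ν u * deriv (deriv (deriv f)) a := by
  subst hu
  -- smoothness bookkeeping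
  have hξ' : ContDiff ℝ (3:ℕ) ξ := by exact_mod_cast hξ
  have hν' : ContDiff ℝ (3:ℕ) ν := by exact_mod_cast hν
  have hf' : ContDiff ℝ (3:ℕ) f := by exact_mod_cast hf
  have hξ2 : ContDiff ℝ (2:ℕ) (deriv ξ) := cd_deriv 2 ξ hξ'
  have hν2 : ContDiff ℝ (2:ℕ) (deriv ν) := cd_deriv 2 ν hν'
  have hf2 : ContDiff ℝ (2:ℕ) (deriv f) := cd_deriv 2 f hf'
  have hξ3 : ContDiff ℝ (1:ℕ) (deriv (deriv ξ)) := cd_deriv 1 _ hξ2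
  have hν3 : ContDiff ℝ (1:ℕ) (deriv (deriv ν)) := cd_deriv 1 _ hν2
  have hf3 : ContDiff ℝ (1:ℕ) (deriv (deriv f)) := cd_deriv 1 _ hf2
  have dξ : Differentiable ℝ ξ := hξ'.differentiable (by norm_num)
  have dν : Differentiable ℝ ν := hν'.differentiable (by norm_num)
  have dF : Differentiable ℝ f := hf'.differentiable (by norm_num)
  have dξ1 : Differentiable ℝ (deriv ξ) := hξ2.differentiable (by norm_num)
  have dν1 : Differentiable ℝ (deriv ν) := hν2.differentiable (by norm_num)
  have dF1 : Differentiable ℝ (deriv f) := hf2.differentiable (by norm_num)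
  have dξ2 : Differentiable ℝ (deriv (deriv ξ)) := hξ3.differentiable (by norm_num)
  have dν2 : Differentiable ℝ (deriv (deriv ν)) := hν3.differentiable (by norm_num)
  have dF2 : Differentiable ℝ (deriv (deriv f)) := hf3.differentiable (by norm_num)
  -- the inner map x ↦ b - f x
  have hinner : ∀ x : ℝ, HasDerivAt (fun t => b - f t) (0 - deriv f x) x :=
    fun x => (hasDerivAt_const x b).sub (dF x).hasDerivAt
  -- first function : fun t => π t b
  have hF : (fun t => π t b) = fun t => ξ t + ν (b - f t) := funext fun t => hπ t b
  have hF1 : deriv (fun t => π t b)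
      = fun t => deriv ξ t - deriv f t * deriv ν (b - f t) := by
    rw [hF]; funext t
    have h1 : HasDerivAt (fun t => ξ t + ν (b - f t))
        (deriv ξ t + deriv ν (b - f t) * (0 - deriv f t)) t :=
      (dξ t).hasDerivAt.add (((dν _).hasDerivAt.comp t (hinner t)))
    rw [h1.deriv]; ring
  have hF2 : deriv (deriv (fun t => π t b))
      = fun x => deriv (deriv ξ) x - deriv (deriv f) x * deriv ν (b - f x)
          + (deriv f x)^2 * deriv (deriv ν) (b - f x) := by
    rw [hF1]; funext x
    have h1 : HasDerivAt (fun t => deriv ξ t - deriv f t * deriv ν (b - f t))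
        (deriv (deriv ξ) x - (deriv (deriv f) x * deriv ν (b - f x)
          + deriv f x * (deriv (deriv ν) (b - f x) * (0 - deriv f x)))) x :=
      (dξ1 x).hasDerivAt.sub
        (((dF1 x).hasDerivAt).mul ((dν1 _).hasDerivAt.comp x (hinner x)))
    rw [h1.deriv]; ring
  -- second function : fun t => deriv (fun s => π t s) b
  have hG : (fun t => deriv (fun s => π t s) b) = fun t => deriv ν (b - f t) := by
    funext t
    have he : (fun s => π t s) = fun s => ξ t + ν (s - f t) := funext fun s => hπ t s
    rw [he]
    have h1 : HasDerivAt (fun s => ξ t + ν (s - f t))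
        (0 + deriv ν (b - f t) * 1) b := by
      refine (hasDerivAt_const b (ξ t)).add ?_
      exact (dν _).hasDerivAt.comp b ((hasDerivAt_id b).sub_const (f t))
    rw [h1.deriv]; ring
  have hG1 : deriv (fun t => deriv (fun s => π t s) b)
      = fun x => -(deriv f x * deriv (deriv ν) (b - f x)) := by
    rw [hG]; funext x
    have h1 : HasDerivAt (fun t => deriv ν (b - f t))
        (deriv (deriv ν) (b - f x) * (0 - deriv f x)) x :=
      (dν1 _).hasDerivAt.comp x (hinner x)
    rw [h1.deriv]; ring
  -- rewrite h0
  rw [hF2, hG1] at h0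
  set A : ℝ → ℝ := fun x => deriv (deriv ξ) x - deriv (deriv f) x * deriv ν (b - f x)
          + (deriv f x)^2 * deriv (deriv ν) (b - f x) with hAdef
  set B : ℝ → ℝ := fun x => -(deriv f x * deriv (deriv ν) (b - f x)) with hBdef
  have hBa : B a ≠ 0 := by simpa [hBdef] using neg_ne_zero.mpr hnz
  -- derivatives of A and B at a
  have hA' : HasDerivAt A
      (deriv (deriv (deriv ξ)) a
        - (deriv (deriv (deriv f)) a * deriv ν (b - f a)
          + deriv (deriv f) a * (deriv (deriv ν) (b - f a) * (0 - deriv f a)))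
        + (2 * deriv f a ^ 1 * deriv (deriv f) a * deriv (deriv ν) (b - f a)
          + (deriv f a)^2 * (deriv (deriv (deriv ν)) (b - f a) * (0 - deriv f a)))) a := by
    refine HasDerivAt.add (HasDerivAt.sub ?_ ?_) ?_
    · exact (dξ2 a).hasDerivAt
    · exact ((dF2 a).hasDerivAt).mul ((dν1 _).hasDerivAt.comp a (hinner a))
    · have := (((dF1 a).hasDerivAt.pow 2)).mul ((dν2 _).hasDerivAt.comp a (hinner a))
      exact this.congr_deriv (by simp)

  have hB' : HasDerivAt B
      (-(deriv (deriv f) a * deriv (deriv ν) (b - f a)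
        + deriv f a * (deriv (deriv (deriv ν)) (b - f a) * (0 - deriv f a)))) a := by
    exact (((dF1 a).hasDerivAt).mul ((dν2 _).hasDerivAt.comp a (hinner a))).neg
  have hdiv := (hA'.div hB' hBa).deriv
  rw [show (A / B) = fun x₁ => A x₁ / B x₁ from rfl, h0] at hdiv
  -- extract polynomial relation
  have key : (deriv (deriv (deriv ξ)) a
        - (deriv (deriv (deriv f)) a * deriv ν (b - f a)
          + deriv (deriv f) a * (deriv (deriv ν) (b - f a) * (0 - deriv f a)))
        + (2 * deriv f a ^ 1 * deriv (deriv f) a * deriv (deriv ν) (b - f a)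
          + (deriv f a)^2 * (deriv (deriv (deriv ν)) (b - f a) * (0 - deriv f a)))) * B a
      - A a * (-(deriv (deriv f) a * deriv (deriv ν) (b - f a)
        + deriv f a * (deriv (deriv (deriv ν)) (b - f a) * (0 - deriv f a)))) = 0 := by
    have h2 : B a ^ 2 ≠ 0 := pow_ne_zero 2 hBa
    field_simp at hdiv
    linarith [hdiv]
  have hfa : deriv f a ≠ 0 := fun h => hnz (by rw [h]; ring)
  have hv2 : deriv (deriv ν) (b - f a) ≠ 0 := fun h => hnz (by rw [h]; ring)
  have hAa : A a = deriv (deriv ξ) a - deriv (deriv f) a * deriv ν (b - f a)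
          + (deriv f a)^2 * deriv (deriv ν) (b - f a) := rfl
  have hBa' : B a = -(deriv f a * deriv (deriv ν) (b - f a)) := rfl
  rw [hAa, hBa'] at key
  field_simp
  linear_combination (-1) * key
end

section
/- Let X : Ω → ℝ^k and N : Ω → ℝ be independent random variables, with N integrable, and let f : ℝ^k → ℝ be Borel measurable with f(X) integrable. Set Y := f(X) + N and R := Y − E[Y | σ(X)]. Then for every Borel measurable ψ : ℝ → ℝ such that ψ(N) is square-integrable, E[ψ(N) | σ(R)] = ψ(N) almost surely; consequently E[(ψ(N) − E[ψ(N) | σ(R)])²] = 0. -/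
open MeasureTheory ProbabilityTheory

/-! Since `f(X)` is `σ(X)`-measurable and `N` is independent of `σ(X)`, the regression
`E[f(X) + N | σ(X)]` equals `f(X) + E[N]`, so the residual `R` is the recentred noise
`N - E[N]` almost surely. Hence `ψ(N) = ψ(R + E[N])` a.s. is (up to a null set) a function of `R`,
and conditioning on `σ(R)` leaves it unchanged. -/

section

variable {Ω E : Type*} {m m' mΩ : MeasurableSpace Ω} {μ : Measure Ω}
  [NormedAddCommGroup E] [NormedSpace ℝ E] [CompleteSpace E]

theorem condExp_add_of_indep [IsProbabilityMeasure μ] {g N : Ω → E}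
    (hm : m ≤ mΩ) (hm' : m' ≤ mΩ) (hg : StronglyMeasurable[m] g) (hN : StronglyMeasurable[m'] N)
    (hind : Indep m' m μ) (hgi : Integrable g μ) (hNi : Integrable N μ) :
    μ[g + N | m] =ᵐ[μ] g + fun _ => μ[N] :=
  (condExp_add hgi hNi m).trans <|
    (condExp_of_stronglyMeasurable hm hg hgi).eventuallyEq.add (condExp_indep_eq hm' hm hN hind)

theorem condExp_comap_eq_of_ae_eq_comp [IsFiniteMeasure μ] {β : Type*} [MeasurableSpace β]
    {R : Ω → β} {Z : Ω → E} {g : β → E} (hR : Measurable R) (hg : StronglyMeasurable g)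
    (hZ : Z =ᵐ[μ] g ∘ R) (hZi : Integrable Z μ) :
    μ[Z | MeasurableSpace.comap R inferInstance] =ᵐ[μ] Z :=
  condExp_of_aestronglyMeasurable' hR.comap_le
    ⟨g ∘ R, hg.comp_measurable (comap_measurable R), hZ⟩ hZi

end

theorem sub_condExp_add_noise_ae_eq {Ω β : Type*} {mΩ : MeasurableSpace Ω} [MeasurableSpace β]
    {μ : Measure Ω} [IsProbabilityMeasure μ] {X : Ω → β} {N : Ω → ℝ} {f : β → ℝ}
    (hX : Measurable X) (hN : Measurable N) (hf : Measurable f) (hind : IndepFun X N μ)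
    (hfi : Integrable (fun ω => f (X ω)) μ) (hNi : Integrable N μ) :
    (fun ω => f (X ω) + N ω - μ[fun ω => f (X ω) + N ω | MeasurableSpace.comap X inferInstance] ω)
      =ᵐ[μ] fun ω => N ω - μ[N] := by
  have hregr : μ[fun ω => f (X ω) + N ω | MeasurableSpace.comap X inferInstance]
      =ᵐ[μ] fun ω => f (X ω) + μ[N] := condExp_add_of_indep hX.comap_le hN.comap_le
    (hf.comp (comap_measurable X)).stronglyMeasurable
    (comap_measurable N).stronglyMeasurable ((IndepFun_iff_Indep X N μ).mp hind).symm hfi hNi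
  filter_upwards [hregr] with ω hω
  rw [hω]
  ring

/-- In an additive noise model `Y = f(X) + N` with `X ⟂ N`, any square-integrable
function `ψ(N)` of the noise is perfectly predictable from the regression residual
`R = Y - E[Y | σ(X)]`: `E[ψ(N) | σ(R)] = ψ(N)` a.s., and the mean-squared error vanishes. -/
theorem stmt_8
    {Ω : Type*} {mΩ : MeasurableSpace Ω}
    (μ : Measure Ω) [IsProbabilityMeasure μ]
    (k : ℕ)
    (X : Ω → (Fin k → ℝ)) (N : Ω → ℝ)
    (hX : Measurable X) (hN : Measurable N)
    (hindep : IndepFun X N μ)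
    (hNint : Integrable N μ)
    (f : (Fin k → ℝ) → ℝ) (hf : Measurable f)
    (hfint : Integrable (fun ω => f (X ω)) μ)
    (Y : Ω → ℝ) (hY : Y = fun ω => f (X ω) + N ω)
    (R : Ω → ℝ)
    (hR : R = fun ω => Y ω - (μ[Y | MeasurableSpace.comap X inferInstance]) ω) :
    ∀ ψ : ℝ → ℝ, Measurable ψ → MemLp (fun ω => ψ (N ω)) 2 μ →
      (μ[fun ω => ψ (N ω) | MeasurableSpace.comap R inferInstance]
          =ᵐ[μ] fun ω => ψ (N ω))
      ∧ ∫ ω, (ψ (N ω)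
          - (μ[fun ω => ψ (N ω) | MeasurableSpace.comap R inferInstance]) ω) ^ 2 ∂μ = 0 := by
  intro ψ hψ hψL2
  subst hY hR
  have hR_meas : Measurable fun ω => f (X ω) + N ω -
      μ[fun ω => f (X ω) + N ω | MeasurableSpace.comap X inferInstance] ω :=
    ((hf.comp hX).add hN).sub (stronglyMeasurable_condExp.measurable.mono hX.comap_le le_rfl)
  have hψN : (fun ω => ψ (N ω)) =ᵐ[μ]
      (fun r => ψ (r + μ[N])) ∘ fun ω => f (X ω) + N ω -
        μ[fun ω => f (X ω) + N ω | MeasurableSpace.comap X inferInstance] ω := by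
    filter_upwards [sub_condExp_add_noise_ae_eq hX hN hf hindep hfint hNint] with ω hω
    rw [Function.comp_apply, hω, sub_add_cancel]
  have hcond := condExp_comap_eq_of_ae_eq_comp hR_meas
    (hψ.comp (measurable_add_const _)).stronglyMeasurable hψN (hψL2.integrable one_le_two)
  refine ⟨hcond, integral_eq_zero_of_ae ?_⟩
  filter_upwards [hcond] with ω hω
  simp [hω]
end

section
/- Let p : ℝ^a × ℝ^b × ℝ^c → ℝ be strictly positive and twice continuously differentiable, and suppose that the cross-partial derivatives ∂²/∂x_i ∂y_j log p(x, y, z) vanish at every point (x, y, z), for all 1 ≤ i ≤ a and 1 ≤ j ≤ b. Then for all x, x₀ ∈ ℝ^a, y, y₀ ∈ ℝ^b and z ∈ ℝ^c, p(x, y, z) · p(x₀, y₀, z) = p(x, y₀, z) · p(x₀, y, z); in particular, fixing any (x₀, y₀), p(x, y, z) = g(x, z) · h(y, z) with g(x, z) := p(x, y₀, z) and h(y, z) := p(x₀, y, z)/p(x₀, y₀, z). -/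
private lemma update_const_induction {n : ℕ} (E : (Fin n → ℝ) → ℝ)
    (h : ∀ (v : Fin n → ℝ) (i : Fin n) (s : ℝ), E (Function.update v i s) = E v)
    (u v : Fin n → ℝ) : E u = E v := by
  suffices H : ∀ k : ℕ, E (fun j => if (j : ℕ) < k then v j else u j) = E u by
    have h1 := H n
    have h2 : (fun j : Fin n => if (j : ℕ) < n then v j else u j) = v := by
      funext j; simp [j.is_lt]
    rw [h2] at h1; exact h1.symm
  intro k
  induction k with
  | zero => simp
  | succ k ih =>
    by_cases hk : k < n
    · have heq : (fun j : Fin n => if (j : ℕ) < k + 1 then v j else u j)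
        = Function.update (fun j : Fin n => if (j : ℕ) < k then v j else u j)
            ⟨k, hk⟩ (v ⟨k, hk⟩) := by
        funext j
        rcases eq_or_ne j ⟨k, hk⟩ with rfl | hj
        · simp
        · rw [Function.update_of_ne hj]
          have hjk : (j : ℕ) ≠ k := fun hc => hj (Fin.ext hc)
          by_cases h' : (j : ℕ) < k
          · simp [h', Nat.lt_succ_of_lt h']
          · have h'' : ¬ (j : ℕ) < k + 1 := by omega
            simp [h', h'']
      rw [heq, h, ih]
    · have heq : (fun j : Fin n => if (j : ℕ) < k + 1 then v j else u j)
        = (fun j : Fin n => if (j : ℕ) < k then v j else u j) := by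
        funext j
        have hj := j.is_lt
        have h1 : ((j : ℕ) < k + 1) ↔ ((j : ℕ) < k) := by omega
        simp only [h1]
      rw [heq, ih]

private lemma key_lemma
    {a b c : ℕ}
    (p : (Fin a → ℝ) × (Fin b → ℝ) × (Fin c → ℝ) → ℝ)
    (hpos : ∀ w, 0 < p w)
    (hsmooth : ContDiff ℝ 2 p)
    (hcross : ∀ (x : Fin a → ℝ) (y : Fin b → ℝ) (z : Fin c → ℝ) (i : Fin a) (j : Fin b),
        deriv (fun s => deriv (fun t =>
          Real.log (p (Function.update x i s, Function.update y j t, z))) (y j)) (x i) = 0)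
    (x : Fin a → ℝ) (y : Fin b → ℝ) (z : Fin c → ℝ) (i : Fin a) (j : Fin b) (s t : ℝ) :
    Real.log (p (Function.update x i s, Function.update y j t, z))
      - Real.log (p (x, Function.update y j t, z))
      = Real.log (p (Function.update x i s, y, z)) - Real.log (p (x, y, z)) := by
  set ψ : ℝ × ℝ → ℝ :=
    fun st => Real.log (p (Function.update x i st.1, Function.update y j st.2, z)) with hψdef
  have hL : ContDiff ℝ 2 (fun w => Real.log (p w)) :=
    contDiff_iff_contDiffAt.mpr fun w =>
      (Real.contDiffAt_log.mpr (hpos w).ne').comp w hsmooth.contDiffAt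
  have hA : ContDiff ℝ 2 (fun st : ℝ × ℝ =>
      ((Function.update x i st.1, Function.update y j st.2, z) :
        (Fin a → ℝ) × (Fin b → ℝ) × (Fin c → ℝ))) := by
    refine ContDiff.prodMk ?_ (ContDiff.prodMk ?_ contDiff_const)
    · refine contDiff_pi.mpr fun k => ?_
      simp only [Function.update_apply]
      by_cases hk : k = i
      · simp only [hk, if_pos rfl]; exact contDiff_fst
      · simp only [if_neg hk]; exact contDiff_const
    · refine contDiff_pi.mpr fun k => ?_
      simp only [Function.update_apply]
      by_cases hk : k = j
      · simp only [hk, if_pos rfl]; exact contDiff_snd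
      · simp only [if_neg hk]; exact contDiff_const
  have hψ : ContDiff ℝ 2 ψ := hL.comp hA
  have hder : ∀ s' t' : ℝ,
      HasDerivAt (fun u => ψ (s', u)) (fderiv ℝ ψ (s', t') (0, 1)) t' := by
    intro s' t'
    have h1 : HasFDerivAt ψ (fderiv ℝ ψ (s', t')) (s', t') :=
      ((hψ.differentiable (by norm_num)) (s', t')).hasFDerivAt
    have h2 : HasDerivAt (fun u : ℝ => ((s', u) : ℝ × ℝ)) ((0 : ℝ), (1 : ℝ)) t' :=
      (hasDerivAt_const t' s').prodMk (hasDerivAt_id t')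
    exact h1.comp_hasDerivAt t' h2
  have gdiff : ∀ t₀ : ℝ, Differentiable ℝ (fun s' => deriv (fun u => ψ (s', u)) t₀) := by
    intro t₀
    have heq : (fun s' => deriv (fun u => ψ (s', u)) t₀)
        = fun s' => fderiv ℝ ψ (s', t₀) (0, 1) := by
      funext s'; exact (hder s' t₀).deriv
    rw [heq]
    have h1 : ContDiff ℝ 1 (fderiv ℝ ψ) := hψ.fderiv_right (by norm_num)
    have h2 : Differentiable ℝ (fun s' : ℝ => fderiv ℝ ψ (s', t₀)) :=
      (h1.differentiable one_ne_zero).comp (differentiable_id.prodMk (differentiable_const _))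
    exact h2.clm_apply (differentiable_const _)
  have gz : ∀ (t₀ s₀ : ℝ), deriv (fun s' => deriv (fun u => ψ (s', u)) t₀) s₀ = 0 := by
    intro t₀ s₀
    have h := hcross (Function.update x i s₀) (Function.update y j t₀) z i j
    simp only [Function.update_idem, Function.update_self] at h
    exact h
  have gconst : ∀ (t₀ s₀ s₁ : ℝ),
      deriv (fun u => ψ (s₀, u)) t₀ = deriv (fun u => ψ (s₁, u)) t₀ :=
    fun t₀ s₀ s₁ => is_const_of_deriv_eq_zero (gdiff t₀) (gz t₀) s₀ s₁
  have hdiffh : Differentiable ℝ (fun u => ψ (s, u) - ψ (x i, u)) :=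
    fun u => ((hder s u).sub (hder (x i) u)).differentiableAt
  have hdz : ∀ u : ℝ, deriv (fun u' => ψ (s, u') - ψ (x i, u')) u = 0 := by
    intro u
    rw [show (fun u' => ψ (s, u') - ψ (x i, u')) = (fun u => ψ (s, u)) - (fun u => ψ (x i, u)) from rfl,
      ((hder s u).sub (hder (x i) u)).deriv]
    have e1 := (hder s u).deriv
    have e2 := (hder (x i) u).deriv
    rw [← e1, ← e2, gconst u s (x i), sub_self]
  have main := is_const_of_deriv_eq_zero hdiffh hdz t (y j)
  simp only [hψdef] at main
  simpa [Function.update_eq_self] using main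

/-- If all cross-partial derivatives `∂²/∂x_i ∂y_j log p` of a strictly positive,
twice continuously differentiable function `p` vanish everywhere, then
`p(x, y, z)·p(x₀, y₀, z) = p(x, y₀, z)·p(x₀, y, z)`; in particular `p` factorizes as
`p(x, y, z) = g(x, z)·h(y, z)` with `g(x, z) = p(x, y₀, z)` and `h(y, z) = p(x₀, y, z)/p(x₀, y₀, z)`. -/
theorem stmt_9
    (a b c : ℕ)
    (p : (Fin a → ℝ) × (Fin b → ℝ) × (Fin c → ℝ) → ℝ)
    (hpos : ∀ w, 0 < p w)
    (hsmooth : ContDiff ℝ 2 p)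
    (hcross : ∀ (x : Fin a → ℝ) (y : Fin b → ℝ) (z : Fin c → ℝ) (i : Fin a) (j : Fin b),
        deriv (fun s => deriv (fun t =>
          Real.log (p (Function.update x i s, Function.update y j t, z))) (y j)) (x i) = 0) :
    (∀ (x x₀ : Fin a → ℝ) (y y₀ : Fin b → ℝ) (z : Fin c → ℝ),
        p (x, y, z) * p (x₀, y₀, z) = p (x, y₀, z) * p (x₀, y, z))
    ∧ ∀ (x₀ : Fin a → ℝ) (y₀ : Fin b → ℝ) (x : Fin a → ℝ) (y : Fin b → ℝ) (z : Fin c → ℝ),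
        p (x, y, z) = p (x, y₀, z) * (p (x₀, y, z) / p (x₀, y₀, z)) := by
  have lem2 : ∀ (x : Fin a → ℝ) (i : Fin a) (s : ℝ) (y y₀ : Fin b → ℝ) (z : Fin c → ℝ),
      Real.log (p (Function.update x i s, y, z)) - Real.log (p (x, y, z))
        = Real.log (p (Function.update x i s, y₀, z)) - Real.log (p (x, y₀, z)) := by
    intro x i s y y₀ z
    exact update_const_induction
      (fun y' => Real.log (p (Function.update x i s, y', z)) - Real.log (p (x, y', z)))
      (fun v jj t => key_lemma p hpos hsmooth hcross x v z i jj s t) y y₀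
  have lem3 : ∀ (x x₀ : Fin a → ℝ) (y y₀ : Fin b → ℝ) (z : Fin c → ℝ),
      Real.log (p (x, y, z)) - Real.log (p (x, y₀, z))
        = Real.log (p (x₀, y, z)) - Real.log (p (x₀, y₀, z)) := by
    intro x x₀ y y₀ z
    exact update_const_induction
      (fun x' => Real.log (p (x', y, z)) - Real.log (p (x', y₀, z)))
      (fun v ii s => by have := lem2 v ii s y y₀ z; linarith) x x₀
  have part1 : ∀ (x x₀ : Fin a → ℝ) (y y₀ : Fin b → ℝ) (z : Fin c → ℝ),
      p (x, y, z) * p (x₀, y₀, z) = p (x, y₀, z) * p (x₀, y, z) := by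
    intro x x₀ y y₀ z
    have h := lem3 x x₀ y y₀ z
    have h2 : Real.log (p (x, y, z)) + Real.log (p (x₀, y₀, z))
        = Real.log (p (x, y₀, z)) + Real.log (p (x₀, y, z)) := by linarith
    have h3 := congrArg Real.exp h2
    rwa [Real.exp_add, Real.exp_add, Real.exp_log (hpos _), Real.exp_log (hpos _),
      Real.exp_log (hpos _), Real.exp_log (hpos _)] at h3
  refine ⟨part1, fun x₀ y₀ x y z => ?_⟩
  have h := part1 x x₀ y y₀ z
  have hne : p (x₀, y₀, z) ≠ 0 := (hpos _).ne'
  field_simp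
  linarith [h]
end
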